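/- If a λ⊥-term M has a typing derivation π with #app(π) = k in the type system of a relational graph model, then the head reduction sequence starting from M terminates in at most k steps (M reaches a head normal form after at most k head-reduction steps). -/

import Mathlib

/-- Untyped λ⊥-terms in de Bruijn notation, intrinsically scoped:
`Tm n` is the set of λ⊥-terms with free variables among `x₀,…,x_{n-1}`. -/
inductive Tm : ℕ → Type
  | var : ∀ {n : ℕ}, Fin n → Tm n
  | lam : ∀ {n : ℕ}, Tm (n + 1) → Tm n
  | app : ∀ {n : ℕ}, Tm n → Tm n → Tm n
  | bot : ∀ {n : ℕ}, Tm n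

/-- Renaming of free variables. -/
def Tm.rename : ∀ {n m : ℕ}, (Fin n → Fin m) → Tm n → Tm m
  | _, _, f, .var k => .var (f k)
  | _, m, f, .lam t =>
      .lam (t.rename fun k => Fin.cases (motive := fun _ => Fin (m + 1)) 0
        (fun j => (f j).succ) k)
  | _, _, f, .app t u => .app (t.rename f) (u.rename f)
  | _, _, _, .bot => .bot

/-- Simultaneous (capture-avoiding) substitution. -/
def Tm.subst : ∀ {n m : ℕ}, (Fin n → Tm m) → Tm n → Tm m
  | _, _, σ, .var k => σ k
  | _, m, σ, .lam t =>
      .lam (t.subst fun k => Fin.cases (motive := fun _ => Tm (m + 1)) (.var 0)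
        (fun j => (σ j).rename Fin.succ) k)
  | _, _, σ, .app t u => .app (t.subst σ) (u.subst σ)
  | _, _, _, .bot => .bot

/-- Substitution `M{N/y}` of `N` for the 0-th free variable of `M`. -/
def Tm.subst1 {n : ℕ} (M : Tm (n + 1)) (N : Tm n) : Tm n :=
  M.subst (Fin.cases (motive := fun _ => Tm n) N Tm.var)

/-- One-step β-reduction (contextual closure of `(λx.M)N → M{N/x}`). -/
inductive Beta : ∀ {n : ℕ}, Tm n → Tm n → Prop
  | redex {n} (M : Tm (n + 1)) (N : Tm n) : Beta (.app (.lam M) N) (M.subst1 N)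
  | appL {n} {M M' N : Tm n} : Beta M M' → Beta (.app M N) (.app M' N)
  | appR {n} {M N N' : Tm n} : Beta N N' → Beta (.app M N) (.app M N')
  | lam {n} {M M' : Tm (n + 1)} : Beta M M' → Beta (.lam M) (.lam M')

/-- A λ⊥-term is a λ-term when it contains no occurrence of `⊥`. -/
def BotFree : ∀ {n : ℕ}, Tm n → Prop
  | _, .var _ => True
  | _, .lam M => BotFree M
  | _, .app M N => BotFree M ∧ BotFree N
  | _, .bot => False

/-- The environment assigning the multiset `[α]` to the variable `k` and `0` elsewhere. -/
def single {D : Type} {n : ℕ} (k : Fin n) (α : D) : Fin n → Multiset D :=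
  fun j => if j = k then {α} else 0

/-- The relational interpretation `⟦M⟧_{x̄} ⊆ M_f(D)ⁿ × D` of a λ⊥-term in a relational
graph model `(D, i)`. -/
def Interp {D : Type} (i : Multiset D × D → D) :
    ∀ {n : ℕ}, Tm n → Set ((Fin n → Multiset D) × D)
  | _, .var k => {p | ∃ α, p = (single k α, α)}
  | _, .lam M => {p | ∃ Γ a α, (Fin.cons a Γ, α) ∈ Interp i M ∧ p = (Γ, i (a, α))}
  | n, .app M N =>
      {p | ∃ (Γ₀ : Fin n → Multiset D) (l : List ((Fin n → Multiset D) × D)),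
        (Γ₀, i (↑(l.map Prod.snd), p.2)) ∈ Interp i M ∧
        (∀ q ∈ l, q ∈ Interp i N) ∧ p.1 = Γ₀ + (l.map Prod.fst).sum}
  | _, .bot => ∅

/-- The non-idempotent intersection type system associated with a relational graph model
`(D, i)`: `Der i Γ M α m` states that the judgment `Γ ⊢ M : α` is derivable by a
derivation `π` with `#app(π) = m` occurrences of the application rule. -/
inductive Der {D : Type} (i : Multiset D × D → D) :
    ∀ {n : ℕ}, (Fin n → Multiset D) → Tm n → D → ℕ → Prop
  | var {n} (k : Fin n) (α : D) : Der i (single k α) (.var k) α 0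
  | lam {n} {Γ : Fin n → Multiset D} {a : Multiset D} {M : Tm (n + 1)} {α : D} {m : ℕ} :
      Der i (Fin.cons a Γ) M α m → Der i Γ (.lam M) (i (a, α)) m
  | app {n} {Γ : Fin n → Multiset D} {M N : Tm n} {α : D} {m : ℕ}
      (l : List ((Fin n → Multiset D) × D × ℕ)) :
      Der i Γ M (i (↑(l.map fun q => q.2.1), α)) m →
      (∀ q ∈ l, Der i q.1 N q.2.1 q.2.2) →
      Der i (Γ + (l.map fun q => q.1).sum) (.app M N) α
        (m + (l.map fun q => q.2.2).sum + 1)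

/-- One step of head reduction. -/
inductive Hred : ∀ {n : ℕ}, Tm n → Tm n → Prop
  | redex {n} (M : Tm (n + 1)) (N : Tm n) : Hred (.app (.lam M) N) (M.subst1 N)
  | lam {n} {M M' : Tm (n + 1)} : Hred M M' → Hred (.lam M) (.lam M')
  | app {n} {M M' N : Tm n} : Hred M M' → (∀ P, M ≠ .lam P) → Hred (.app M N) (.app M' N)

/-- `HredN j M N`: `M` head-reduces to `N` in exactly `j` steps. -/
def HredN : ∀ {n : ℕ}, ℕ → Tm n → Tm n → Prop
  | _, 0, M, N => M = N
  | _, j + 1, M, N => ∃ P, Hred M P ∧ HredN j P N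

/-!
Each head-reduction step strictly decreases the number of `app` rules of some derivation of the
same judgment. At the contracted redex `(λx.P)Q`, injectivity of `i` forces the multiset of types
assigned to `x` in the derivation of `P` to be exactly the multiset of types of the derivations
of `Q` in the premises of the `app` rule. Since the typing is non-idempotent, substituting each of
these derivations for one axiom on `x` uses every derivation of `Q` exactly once: no `app` rule is
duplicated or created, while the one typing the redex disappears. Strong induction on the number
of `app` rules then bounds the length of the head-reduction sequence.
-/

theorem Multiset.exists_eq_add_of_map_eq_add {α β : Type*} (f : α → β) {s : Multiset α}
    {a b : Multiset β} (h : s.map f = a + b) :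
    ∃ s₁ s₂, s = s₁ + s₂ ∧ s₁.map f = a ∧ s₂.map f = b := by
  induction s using Multiset.induction_on generalizing a b with
  | empty =>
    obtain ⟨rfl, rfl⟩ := add_eq_zero.mp (Multiset.map_zero f ▸ h).symm
    exact ⟨0, 0, by simp, by simp, by simp⟩
  | cons x s ih =>
    rw [Multiset.map_cons] at h
    rcases Multiset.mem_add.mp (h ▸ Multiset.mem_cons_self (f x) _) with hx | hx
    · obtain ⟨a', rfl⟩ := Multiset.exists_cons_of_mem hx
      rw [Multiset.cons_add, Multiset.cons_inj_right] at h
      obtain ⟨s₁, s₂, rfl, rfl, rfl⟩ := ih h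
      exact ⟨x ::ₘ s₁, s₂, by simp, by simp, rfl⟩
    · obtain ⟨b', rfl⟩ := Multiset.exists_cons_of_mem hx
      rw [Multiset.add_cons, Multiset.cons_inj_right] at h
      obtain ⟨s₁, s₂, rfl, rfl, rfl⟩ := ih h
      exact ⟨s₁, x ::ₘ s₂, by simp, rfl, by simp⟩

section Context

variable {D : Type} {n m : ℕ}

theorem single_eq_pi_single (k : Fin n) (α : D) : single k α = Pi.single k {α} := by
  ext1 j
  simp [single, Pi.single_apply]

def renameCtx (f : Fin n → Fin m) : (Fin n → Multiset D) →+ (Fin m → Multiset D) where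
  toFun Γ := ∑ k, Pi.single (f k) (Γ k)
  map_zero' := by simp
  map_add' Γ Δ := by simp [Pi.single_add, Finset.sum_add_distrib]

theorem renameCtx_apply (f : Fin n → Fin m) (Γ : Fin n → Multiset D) :
    renameCtx f Γ = ∑ k, Pi.single (f k) (Γ k) := rfl

theorem renameCtx_pi_single (f : Fin n → Fin m) (k : Fin n) (a : Multiset D) :
    renameCtx f (Pi.single k a) = Pi.single (f k) a := by
  rw [renameCtx_apply, Finset.sum_eq_single k] <;> simp +contextual

theorem pi_single_zero_add_renameCtx_succ (a : Multiset D) (Γ : Fin n → Multiset D) :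
    Pi.single 0 a + renameCtx Fin.succ Γ = Fin.cons a Γ := by
  ext1 j
  refine Fin.cases ?_ (fun j => ?_) j <;>
    simp [renameCtx_apply, Finset.sum_apply, Pi.single_apply, Fin.succ_ne_zero]

theorem renameCtx_cons (f : Fin n → Fin m) (a : Multiset D) (Γ : Fin n → Multiset D) :
    renameCtx (Fin.cons 0 (Fin.succ ∘ f)) (Fin.cons a Γ) = Fin.cons a (renameCtx f Γ) := by
  conv_rhs => rw [← pi_single_zero_add_renameCtx_succ, renameCtx_apply f, map_sum]
  simp only [renameCtx_pi_single]
  simp [renameCtx_apply, Fin.sum_univ_succ]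

end Context

section Typing

variable {D : Type} {i : Multiset D × D → D} {n m : ℕ}

/-- The right premises of the `app` rule: derivations `Δⱼ ⊢ N : αⱼ` for the elements `αⱼ` of
the multiset `a`, with `Δ = ∑ Δⱼ` and `c` the sum of their `#app` counts. -/
def DerMany (i : Multiset D × D → D) (Δ : Fin n → Multiset D) (N : Tm n) (a : Multiset D)
    (c : ℕ) : Prop :=
  ∃ s : Multiset ((Fin n → Multiset D) × D × ℕ), (∀ q ∈ s, Der i q.1 N q.2.1 q.2.2) ∧
    Δ = (s.map fun q => q.1).sum ∧ a = (s.map fun q => q.2.1) ∧ c = (s.map fun q => q.2.2).sum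

theorem DerMany.of_list {N : Tm n} (l : List ((Fin n → Multiset D) × D × ℕ))
    (h : ∀ q ∈ l, Der i q.1 N q.2.1 q.2.2) :
    DerMany i (l.map fun q => q.1).sum N ↑(l.map fun q => q.2.1) (l.map fun q => q.2.2).sum :=
  ⟨l, h, by simp, by simp, by simp⟩

theorem Der.app_of_derMany {Γ Δ : Fin n → Multiset D} {M N : Tm n} {a : Multiset D} {α : D}
    {k c : ℕ}
    (hM : Der i Γ M (i (a, α)) k) (hN : DerMany i Δ N a c) :
    Der i (Γ + Δ) (.app M N) α (k + c + 1) := by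
  obtain ⟨s, hs, rfl, rfl, rfl⟩ := hN
  obtain ⟨l, rfl⟩ := Quotient.exists_rep s
  simp only [Multiset.quot_mk_to_coe, Multiset.map_coe, Multiset.sum_coe,
    Multiset.mem_coe] at hM hs ⊢
  exact Der.app l hM hs

theorem Der.app_inv {Γ : Fin n → Multiset D} {M N : Tm n} {α : D} {c : ℕ}
    (h : Der i Γ (.app M N) α c) :
    ∃ Γ₀ Δ a c₀ c₁, Γ = Γ₀ + Δ ∧ c = c₀ + c₁ + 1 ∧
      Der i Γ₀ M (i (a, α)) c₀ ∧ DerMany i Δ N a c₁ := by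
  cases h with
  | app l hM hN => exact ⟨_, _, _, _, _, rfl, rfl, hM, DerMany.of_list l hN⟩

theorem Der.lam_inv {Γ : Fin n → Multiset D} {M : Tm (n + 1)} {β : D} {c : ℕ}
    (h : Der i Γ (.lam M) β c) : ∃ a α, β = i (a, α) ∧ Der i (Fin.cons a Γ) M α c := by
  cases h with
  | lam h => exact ⟨_, _, rfl, h⟩

namespace DerMany

variable {N : Tm n} {Δ Δ' : Fin n → Multiset D} {a b : Multiset D} {c c' : ℕ}

theorem zero : DerMany i 0 N 0 0 := ⟨0, by simp⟩

theorem add (h : DerMany i Δ N a c) (h' : DerMany i Δ' N b c') :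
    DerMany i (Δ + Δ') N (a + b) (c + c') := by
  obtain ⟨s, hs, rfl, rfl, rfl⟩ := h
  obtain ⟨s', hs', rfl, rfl, rfl⟩ := h'
  refine ⟨s + s', fun q hq => ?_, by simp, by simp, by simp⟩
  exact (Multiset.mem_add.mp hq).elim (hs q) (hs' q)

theorem eq_zero (h : DerMany i Δ N 0 c) : Δ = 0 ∧ c = 0 := by
  obtain ⟨s, -, rfl, hs, rfl⟩ := h
  simp [Multiset.map_eq_zero.mp hs.symm]

theorem singleton_iff {α : D} : DerMany i Δ N {α} c ↔ Der i Δ N α c := by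
  constructor
  · rintro ⟨s, hs, rfl, hα, rfl⟩
    obtain ⟨q, rfl, rfl⟩ := Multiset.map_eq_singleton.mp hα.symm
    simpa using hs q (Multiset.mem_singleton_self q)
  · intro h
    exact ⟨{(Δ, α, c)}, by simpa using h, by simp, by simp, by simp⟩

theorem split (h : DerMany i Δ N (a + b) c) :
    ∃ Δ₁ Δ₂ c₁ c₂, Δ = Δ₁ + Δ₂ ∧ c = c₁ + c₂ ∧ DerMany i Δ₁ N a c₁ ∧ DerMany i Δ₂ N b c₂ := by
  obtain ⟨s, hs, rfl, hab, rfl⟩ := h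
  obtain ⟨s₁, s₂, rfl, rfl, rfl⟩ := Multiset.exists_eq_add_of_map_eq_add _ hab.symm
  refine ⟨_, _, _, _, by simp, by simp, ⟨s₁, fun q hq => hs q ?_, rfl, rfl, rfl⟩,
    ⟨s₂, fun q hq => hs q ?_, rfl, rfl, rfl⟩⟩ <;> simp [hq]

theorem var (k : Fin n) (a : Multiset D) : DerMany i (Pi.single k a) (.var k) a 0 := by
  refine ⟨a.map fun β => (single k β, β, 0), ?_, ?_, by simp, by simp⟩
  · simp only [Multiset.mem_map]
    rintro _ ⟨β, -, rfl⟩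
    exact Der.var k β
  · have := map_multiset_sum (AddMonoidHom.single (fun _ : Fin n => Multiset D) k)
      (a.map ({·}))
    simpa [Multiset.map_map, Function.comp_def, single_eq_pi_single] using this

end DerMany

end Typing

section Substitution

variable {D : Type} {i : Multiset D × D → D}

theorem Der.rename {n : ℕ} {Γ : Fin n → Multiset D} {M : Tm n} {α : D} {c : ℕ}
    (h : Der i Γ M α c) {m : ℕ} (f : Fin n → Fin m) :
    Der i (renameCtx f Γ) (M.rename f) α c := by
  induction h generalizing m with
  | var k α =>
    rw [single_eq_pi_single, renameCtx_pi_single, ← single_eq_pi_single]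
    exact Der.var _ _
  | lam _ ih =>
    have := ih (Fin.cons 0 (Fin.succ ∘ f))
    rw [renameCtx_cons] at this
    exact Der.lam this
  | app l _ _ ihM ihN =>
    rw [map_add, map_list_sum, List.map_map]
    refine Der.app_of_derMany (ihM f) ?_
    simpa [Function.comp_def] using
      DerMany.of_list (i := i) (l.map fun q => (renameCtx f q.1, q.2.1, q.2.2))
        (by simp only [List.mem_map]; rintro _ ⟨q, hq, rfl⟩; exact ihN q hq f)

theorem DerMany.rename {n m : ℕ} {Δ : Fin n → Multiset D} {N : Tm n} {a : Multiset D} {c : ℕ}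
    (h : DerMany i Δ N a c) (f : Fin n → Fin m) :
    DerMany i (renameCtx f Δ) (N.rename f) a c := by
  obtain ⟨s, hs, rfl, rfl, rfl⟩ := h
  refine ⟨s.map fun q => (renameCtx f q.1, q.2.1, q.2.2), ?_, ?_, by simp, by simp⟩
  · simp only [Multiset.mem_map]
    rintro _ ⟨q, hq, rfl⟩
    exact (hs q hq).rename f
  · simp [map_multiset_sum]

theorem DerMany.of_list_subst {n m : ℕ} {N : Tm n} {σ : Fin n → Tm m}
    (l : List ((Fin n → Multiset D) × D × ℕ))
    (ih : ∀ q ∈ l, ∀ {Δ : Fin n → Fin m → Multiset D} {d : Fin n → ℕ},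
      (∀ k, DerMany i (Δ k) (σ k) (q.1 k) (d k)) →
      Der i (∑ k, Δ k) (N.subst σ) q.2.1 (q.2.2 + ∑ k, d k))
    {Δ : Fin n → Fin m → Multiset D} {d : Fin n → ℕ}
    (hσ : ∀ k, DerMany i (Δ k) (σ k) ((l.map fun q => q.1).sum k) (d k)) :
    DerMany i (∑ k, Δ k) (N.subst σ) ↑(l.map fun q => q.2.1)
      ((l.map fun q => q.2.2).sum + ∑ k, d k) := by
  induction l generalizing Δ d with
  | nil =>
    have hzero k := (hσ k).eq_zero
    simp only [List.map_nil, List.sum_nil, Multiset.coe_nil] at hzero ⊢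
    simpa [hzero] using DerMany.zero
  | cons q l ihl =>
    simp only [List.map_cons, List.sum_cons, Pi.add_apply] at hσ ⊢
    choose Δ₁ Δ₂ d₁ d₂ hΔ hd h₁ h₂ using fun k => (hσ k).split
    have := (DerMany.singleton_iff.mpr (ih q (by simp) h₁)).add
      (ihl (fun q hq => ih q (by simp [hq])) h₂)
    simp only [hΔ, hd, Finset.sum_add_distrib, ← Multiset.cons_coe, ← Multiset.singleton_add]
    convert this using 1
    omega

theorem Der.subst {n : ℕ} {Γ : Fin n → Multiset D} {M : Tm n} {α : D} {c : ℕ}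
    (h : Der i Γ M α c) {m : ℕ} {σ : Fin n → Tm m} {Δ : Fin n → Fin m → Multiset D}
    {d : Fin n → ℕ} (hσ : ∀ k, DerMany i (Δ k) (σ k) (Γ k) (d k)) :
    Der i (∑ k, Δ k) (M.subst σ) α (c + ∑ k, d k) := by
  induction h generalizing m with
  | var k α =>
    have hzero : ∀ j ≠ k, Δ j = 0 ∧ d j = 0 := fun j hj =>
      DerMany.eq_zero (by simpa [single, hj] using hσ j)
    rw [Finset.sum_eq_single k (fun j _ hj => (hzero j hj).1) (by simp),
      Finset.sum_eq_single k (fun j _ hj => (hzero j hj).2) (by simp), zero_add]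
    have hk := hσ k
    simp only [single, if_pos] at hk
    exact DerMany.singleton_iff.mp hk
  | @lam n Γ a _ _ _ _ ih =>
    let Δ' : Fin (n + 1) → Fin (m + 1) → Multiset D :=
      Fin.cons (Pi.single 0 a) fun j => renameCtx Fin.succ (Δ j)
    let d' : Fin (n + 1) → ℕ := Fin.cons 0 d
    have hσ' : ∀ k, DerMany i (Δ' k)
        (Fin.cases (.var (0 : Fin (m + 1))) (fun j => (σ j).rename Fin.succ) k)
        ((Fin.cons a Γ : Fin (n + 1) → Multiset D) k) (d' k) :=
      Fin.cases (by simpa [Δ', d'] using DerMany.var (0 : Fin (m + 1)) a)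
        fun j => by simpa [Δ', d'] using (hσ j).rename Fin.succ
    have := ih hσ'
    simp only [Δ', d', Fin.sum_univ_succ, Fin.cons_zero, Fin.cons_succ, ← map_sum,
      pi_single_zero_add_renameCtx_succ, zero_add] at this
    exact Der.lam this
  | @app _ _ M N _ _ l _ _ ihM ihN =>
    simp only [Pi.add_apply] at hσ
    choose Δ₁ Δ₂ d₁ d₂ hΔ hd h₁ h₂ using fun k => (hσ k).split
    simp only [hΔ, hd, Finset.sum_add_distrib]
    show Der i _ ((M.subst σ).app (N.subst σ)) _ _
    convert (ihM h₁).app_of_derMany (DerMany.of_list_subst l (fun q hq => ihN q hq) h₂) using 1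
    omega

end Substitution

section HeadReduction

variable {D : Type} {i : Multiset D × D → D}

theorem Der.subst1 {n : ℕ} {Γ Δ : Fin n → Multiset D} {M : Tm (n + 1)} {N : Tm n}
    {a : Multiset D} {α : D} {c d : ℕ} (hM : Der i (Fin.cons a Γ) M α c)
    (hN : DerMany i Δ N a d) : Der i (Γ + Δ) (M.subst1 N) α (c + d) := by
  let Δ' : Fin (n + 1) → Fin n → Multiset D := Fin.cons Δ fun j => Pi.single j (Γ j)
  let d' : Fin (n + 1) → ℕ := Fin.cons d 0
  have hσ : ∀ k, DerMany i (Δ' k) (Fin.cases N Tm.var k)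
      ((Fin.cons a Γ : Fin (n + 1) → Multiset D) k) (d' k) :=
    Fin.cases (by simpa [Δ', d'] using hN) fun j => by simpa [Δ', d'] using DerMany.var j (Γ j)
  simpa [Tm.subst1, Δ', d', Fin.sum_univ_succ, Finset.univ_sum_single, add_comm] using hM.subst hσ

theorem Der.exists_lt_of_hred (hi : Function.Injective i) {n : ℕ} {M M' : Tm n}
    (hr : Hred M M') {Γ : Fin n → Multiset D} {α : D} {c : ℕ} (h : Der i Γ M α c) :
    ∃ c' < c, Der i Γ M' α c' := by
  induction hr generalizing α c with
  | redex P Q =>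
    obtain ⟨Γ₀, Δ, a, c₀, c₁, rfl, rfl, hP, hQ⟩ := h.app_inv
    obtain ⟨a', α', he, hP⟩ := hP.lam_inv
    obtain ⟨rfl, rfl⟩ := Prod.ext_iff.mp (hi he)
    exact ⟨c₀ + c₁, by omega, hP.subst1 hQ⟩
  | lam _ ih =>
    obtain ⟨a, α, rfl, hM⟩ := h.lam_inv
    obtain ⟨c', hc', hM'⟩ := ih hM
    exact ⟨c', hc', hM'.lam⟩
  | app _ _ ih =>
    obtain ⟨Γ₀, Δ, a, c₀, c₁, rfl, rfl, hM, hN⟩ := h.app_inv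
    obtain ⟨c', hc', hM'⟩ := ih hM
    exact ⟨c' + c₁ + 1, by omega, hM'.app_of_derMany hN⟩

end HeadReduction

theorem stmt_11_general {D : Type} (i : Multiset D × D → D)
    (hi : Function.Injective i) {n : ℕ} {Γ : Fin n → Multiset D} {M : Tm n}
    {α : D} {k : ℕ} (h : Der i Γ M α k) :
    ∃ j ≤ k, ∃ M' : Tm n, HredN j M M' ∧ ∀ M'', ¬ Hred M' M'' := by
  induction k using Nat.strong_induction_on generalizing Γ M α with
  | _ k ih =>
    by_cases hnf : ∀ M'', ¬ Hred M M''
    · exact ⟨0, k.zero_le, M, rfl, hnf⟩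
    push Not at hnf
    obtain ⟨P, hP⟩ := hnf
    obtain ⟨c, hc, hPc⟩ := h.exists_lt_of_hred hi hP
    obtain ⟨j, hj, M', hPM', hM'⟩ := ih c hc hPc
    exact ⟨j + 1, by omega, M', ⟨P, hP, hPM'⟩, hM'⟩

/-- If a λ⊥-term has a typing derivation with `#app(π) = k` in the type system of a
relational graph model, then its head reduction terminates (in a head normal form)
after at most `k` steps. -/
theorem stmt_11 {D : Type} [Infinite D] (i : Multiset D × D → D)
    (hi : Function.Injective i) {n : ℕ} {Γ : Fin n → Multiset D} {M : Tm n}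
    {α : D} {k : ℕ} (h : Der i Γ M α k) :
    ∃ j ≤ k, ∃ M' : Tm n, HredN j M M' ∧ ∀ M'', ¬ Hred M' M'' :=
  stmt_11_general i hi h
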